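/- arXiv:1903.10609 — 3 statements merged into one kernel-verified Lean document; each statement's English description precedes it below -/
import Mathlib

section
/- Let n > m > 0 be coprime integers and let [b₁; b₂, …, b_r] be the regular (Euclidean) continued fraction of n/m with b_r > 1. Then for any integer continued fraction expansion n/m = [c₁; c₂, …, c_s] (arbitrary nonzero integer coefficients), one has Σᵢ₌₁ˢ (|cᵢ| + 1) ≥ Σᵢ₌₁ʳ (bᵢ + 1). That is, the Euclidean continued fraction minimizes the total cost Σ(|coefficient| + 1) among all integer continued fraction representations. -/
/-!
Let `ψ(x)` be the cost `Σ (quotient + 1)` of the Euclidean algorithm run on `(|num x|, den x)`, so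
that the Euclidean expansion of `x > 0` costs exactly `ψ(x)`. The function `ψ` is even and grows by
at most one under `x ↦ x + 1` and under `x ↦ x⁻¹`, with equality along the steps of the Euclidean
algorithm. The only nontrivial case is `ψ(1 - t) ≤ ψ(t) + 1` for `0 < t < 1`, which follows from the
identity `ψ(1 - t) = ψ(t) + 1` for `t < 1/2`. Hence `ψ(c + y⁻¹) ≤ |c| + 1 + ψ(y)`, and induction on
the length shows that every expansion of `x` costs at least `ψ(x)`.
-/

/-- Value of a finite continued fraction with integer coefficients. -/
def cfVal : List ℤ → ℚ
  | [] => 0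
  | [a] => (a : ℚ)
  | a :: b :: l => (a : ℚ) + 1 / cfVal (b :: l)

/-- A continued fraction expansion is valid if every intermediate denominator,
i.e. the value of every proper nonempty suffix, is nonzero. -/
def ValidCF (l : List ℤ) : Prop :=
  ∀ t : List ℤ, t ≠ [] → t <:+ l → t ≠ l → cfVal t ≠ 0

def euclidCostNat (p q : ℕ) : ℤ :=
  if h : q = 0 then 0 else (p / q : ℕ) + 1 + euclidCostNat q (p % q)
termination_by q
decreasing_by exact Nat.mod_lt _ (Nat.pos_of_ne_zero h)

namespace euclidCostNat

@[simp]
lemma zero_right (p : ℕ) : euclidCostNat p 0 = 0 := by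
  rw [euclidCostNat]; simp

lemma of_ne_zero {q : ℕ} (p : ℕ) (hq : q ≠ 0) :
    euclidCostNat p q = (p / q : ℕ) + 1 + euclidCostNat q (p % q) := by
  rw [euclidCostNat]; simp [hq]

lemma one_right (p : ℕ) : euclidCostNat p 1 = p + 1 := by
  rw [of_ne_zero p one_ne_zero, Nat.div_one, Nat.mod_one, zero_right, add_zero]

lemma add_right {q : ℕ} (p : ℕ) (hq : q ≠ 0) :
    euclidCostNat (p + q) q = euclidCostNat p q + 1 := by
  rw [of_ne_zero _ hq, of_ne_zero p hq, Nat.add_div_right _ (Nat.pos_of_ne_zero hq),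
    Nat.add_mod_right]
  push_cast
  ring

lemma of_lt {p q : ℕ} (h : p < q) : euclidCostNat p q = euclidCostNat q p + 1 := by
  rw [of_ne_zero p (by omega), Nat.div_eq_of_lt h, Nat.mod_eq_of_lt h]
  push_cast
  ring

end euclidCostNat

def euclidCost (x : ℚ) : ℤ := euclidCostNat x.num.natAbs x.den

@[simp]
lemma euclidCost_neg (x : ℚ) : euclidCost (-x) = euclidCost x := by
  simp [euclidCost]

lemma euclidCost_intCast (k : ℤ) : euclidCost k = |k| + 1 := by
  simp [euclidCost, euclidCostNat.one_right]

lemma euclidCost_add_one {x : ℚ} (hx : 0 ≤ x) : euclidCost (x + 1) = euclidCost x + 1 := by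
  have hden : (x + 1).den = x.den := by exact_mod_cast Rat.add_intCast_den x 1
  have hnum : (x + 1).num = x.num + x.den := by
    have h := Rat.mul_den_eq_num (x + 1)
    rw [hden, add_mul, Rat.mul_den_eq_num, one_mul] at h
    exact_mod_cast h.symm
  have hnum_nonneg : 0 ≤ x.num := Rat.num_nonneg.mpr hx
  have : (x.num + x.den).natAbs = x.num.natAbs + x.den := by omega
  rw [euclidCost, euclidCost, hden, hnum, this, euclidCostNat.add_right _ x.den_ne_zero]

lemma euclidCost_of_pos_of_lt_one {x : ℚ} (h0 : 0 < x) (h1 : x < 1) :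
    euclidCost x = euclidCost x⁻¹ + 1 := by
  have hnum : 0 < x.num := Rat.num_pos.mpr h0
  have hlt : x.num.natAbs < x.den := by
    have := Rat.num_lt_denom_iff.mpr h1
    omega
  have hinv_num : x⁻¹.num = x.den := by simp [Rat.num_inv, Int.sign_eq_one_of_pos hnum]
  have hinv_den : x⁻¹.den = x.num.natAbs := Rat.den_inv_of_ne_zero h0.ne'
  rw [euclidCost, euclidCost, hinv_num, hinv_den, Int.natAbs_natCast, euclidCostNat.of_lt hlt]

lemma euclidCost_add_intCast {x : ℚ} (hx : 0 ≤ x) {k : ℤ} (hk : 0 ≤ k) :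
    euclidCost (x + k) = euclidCost x + k := by
  lift k to ℕ using hk
  induction k with
  | zero => simp
  | succ k ih =>
    push_cast at ih ⊢
    rw [← add_assoc, euclidCost_add_one (by positivity), ih, add_assoc]

lemma euclidCost_inv_le (x : ℚ) : euclidCost x⁻¹ ≤ euclidCost x + 1 := by
  wlog hx : 0 ≤ x generalizing x
  · simpa using this (-x) (by linarith)
  rcases hx.eq_or_lt with rfl | hx
  · simp
  rcases lt_trichotomy x 1 with h1 | rfl | h1
  · linarith [euclidCost_of_pos_of_lt_one hx h1]
  · simp
  · have := euclidCost_of_pos_of_lt_one (inv_pos.mpr hx) (inv_lt_one_of_one_lt₀ h1)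
    rw [inv_inv] at this
    linarith

lemma euclidCost_one_sub_of_lt_half {t : ℚ} (h0 : 0 < t) (h1 : t < 1 / 2) :
    euclidCost (1 - t) = euclidCost t + 1 := by
  have hs0 : 0 < t / (1 - t) := div_pos h0 (by linarith)
  have hs1 : t / (1 - t) < 1 := (div_lt_one (by linarith)).mpr (by linarith)
  have hne : 1 - t ≠ 0 := by linarith
  have hinv_sub : (1 - t)⁻¹ = t / (1 - t) + 1 := by field_simp; ring
  have hinv_s : (t / (1 - t))⁻¹ = t⁻¹ - 1 := by field_simp
  have ht_inv : 0 ≤ t⁻¹ - 1 := by rw [sub_nonneg, one_le_inv₀ h0]; linarith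
  -- Three Euclidean steps from `1 - t` and two from `t` both lead to `t⁻¹ - 1`.
  rw [euclidCost_of_pos_of_lt_one (by linarith) (by linarith), hinv_sub,
    euclidCost_add_one hs0.le, euclidCost_of_pos_of_lt_one hs0 hs1, hinv_s,
    euclidCost_of_pos_of_lt_one h0 (by linarith), ← sub_add_cancel t⁻¹ 1,
    euclidCost_add_one ht_inv, sub_add_cancel]

lemma euclidCost_one_sub_le {t : ℚ} (h0 : 0 < t) (h1 : t < 1) :
    euclidCost (1 - t) ≤ euclidCost t + 1 := by
  rcases lt_trichotomy t (1 / 2) with ht | rfl | ht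
  · rw [euclidCost_one_sub_of_lt_half h0 ht]
  · norm_num
  · have := euclidCost_one_sub_of_lt_half (t := 1 - t) (by linarith) (by linarith)
    rw [sub_sub_cancel] at this
    linarith

lemma euclidCost_add_one_le (x : ℚ) : euclidCost (x + 1) ≤ euclidCost x + 1 := by
  rcases le_or_gt 0 x with hx | hx
  · rw [euclidCost_add_one hx]
  rcases le_or_gt x (-1) with hx1 | hx1
  · have := euclidCost_add_one (x := -x - 1) (by linarith)
    rw [sub_add_cancel, euclidCost_neg] at this
    rw [← euclidCost_neg (x + 1), neg_add', this]
    linarith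
  · have := euclidCost_one_sub_le (t := -x) (by linarith) (by linarith)
    rwa [sub_neg_eq_add, add_comm, euclidCost_neg] at this

lemma euclidCost_add_natCast_le (x : ℚ) (n : ℕ) : euclidCost (x + n) ≤ euclidCost x + n := by
  induction n with
  | zero => simp
  | succ n ih =>
    push_cast
    rw [← add_assoc]
    linarith [euclidCost_add_one_le (x + n)]

lemma euclidCost_add_intCast_le (x : ℚ) (k : ℤ) : euclidCost (x + k) ≤ euclidCost x + |k| := by
  obtain ⟨n, rfl | rfl⟩ := Int.eq_nat_or_neg k
  · simpa using euclidCost_add_natCast_le x n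
  · have h : x + ((-n : ℤ) : ℚ) = -(-x + n) := by push_cast; ring
    rw [h, euclidCost_neg, abs_neg, Nat.abs_cast]
    simpa using euclidCost_add_natCast_le (-x) n

lemma euclidCost_add_inv_le (a : ℤ) (y : ℚ) : euclidCost (a + y⁻¹) ≤ |a| + 1 + euclidCost y := by
  rw [add_comm]
  linarith [euclidCost_add_intCast_le y⁻¹ a, euclidCost_inv_le y]

lemma euclidCost_add_inv {a : ℤ} (ha : 0 ≤ a) {y : ℚ} (hy : 1 < y) :
    euclidCost (a + y⁻¹) = a + 1 + euclidCost y := by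
  have := euclidCost_of_pos_of_lt_one (inv_pos.mpr (by linarith)) (inv_lt_one_of_one_lt₀ hy)
  rw [inv_inv] at this
  rw [add_comm, euclidCost_add_intCast (by positivity) ha, this]
  ring

def cfCost (c : List ℤ) : ℤ := (c.map fun x => |x| + 1).sum

lemma euclidCost_cfVal_le_cfCost : ∀ c : List ℤ, c ≠ [] → euclidCost (cfVal c) ≤ cfCost c
  | [], h => absurd rfl h
  | [a], _ => by simp [cfVal, cfCost, euclidCost_intCast]
  | a :: b :: l, _ => by
    have ih := euclidCost_cfVal_le_cfCost (b :: l) (List.cons_ne_nil _ _)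
    calc euclidCost (cfVal (a :: b :: l)) = euclidCost (a + (cfVal (b :: l))⁻¹) := by
          rw [cfVal, one_div]
      _ ≤ |a| + 1 + euclidCost (cfVal (b :: l)) := euclidCost_add_inv_le a _
      _ ≤ |a| + 1 + cfCost (b :: l) := by gcongr
      _ = cfCost (a :: b :: l) := by simp [cfCost, add_assoc]

lemma one_lt_cfVal : ∀ b : List ℤ, (∀ x ∈ b, 0 < x) → 1 < b.getLast! → 1 < cfVal b
  | [], _, h => by simp at h
  | [a], _, h => by simp only [cfVal]; exact_mod_cast h
  | a :: b :: l, hpos, h => by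
    have ih := one_lt_cfVal (b :: l) (fun x hx => hpos x (List.mem_cons_of_mem a hx))
      (by simpa using h)
    have ha : (1 : ℚ) ≤ a := by exact_mod_cast hpos a List.mem_cons_self
    have hinv : 0 < 1 / cfVal (b :: l) := one_div_pos.mpr (by linarith)
    rw [cfVal]
    linarith

lemma cfCost_eq_euclidCost_cfVal : ∀ b : List ℤ, b ≠ [] → (∀ x ∈ b, 0 < x) →
    (b.length = 1 ∨ 1 < b.getLast!) → cfCost b = euclidCost (cfVal b)
  | [], h, _, _ => absurd rfl h
  | [a], _, _, _ => by simp [cfVal, cfCost, euclidCost_intCast]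
  | a :: b :: l, _, hpos, hlast => by
    have hpos' : ∀ x ∈ b :: l, 0 < x := fun x hx => hpos x (List.mem_cons_of_mem a hx)
    have hlast' : 1 < (b :: l).getLast! := by simpa using hlast
    have ih := cfCost_eq_euclidCost_cfVal (b :: l) (List.cons_ne_nil _ _) hpos' (Or.inr hlast')
    rw [cfVal, one_div, euclidCost_add_inv (hpos a List.mem_cons_self).le
      (one_lt_cfVal _ hpos' hlast'), ← ih]
    simp [cfCost, abs_of_pos (hpos a List.mem_cons_self), add_assoc]

theorem euclidean_cf_minimizes_cost_general (n m : ℤ) (b : List ℤ) (hb : b ≠ [])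
    (hbpos : ∀ x ∈ b, 0 < x) (hblast : b.length = 1 ∨ 1 < b.getLast!)
    (hbval : cfVal b = (n : ℚ) / m) (c : List ℤ) (hc : c ≠ []) (hcval : cfVal c = (n : ℚ) / m) :
    ((b.map (fun x => |x| + 1)).sum : ℤ) ≤ (c.map (fun x => |x| + 1)).sum :=
  calc cfCost b = euclidCost (cfVal b) := cfCost_eq_euclidCost_cfVal b hb hbpos hblast
    _ = euclidCost (cfVal c) := by rw [hbval, hcval]
    _ ≤ cfCost c := euclidCost_cfVal_le_cfCost c hc

/-- The Euclidean continued fraction of `n/m` (all coefficients positive, last `> 1`)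
minimizes the total cost `Σ (|cᵢ| + 1)` among all valid integer continued fraction
representations of `n/m`. -/
theorem euclidean_cf_minimizes_cost (n m : ℤ) (hm : 0 < m) (hnm : m < n)
    (hcop : IsCoprime n m) (b : List ℤ) (hb : b ≠ []) (hbpos : ∀ x ∈ b, 0 < x)
    (hblast : b.length = 1 ∨ 1 < b.getLast!) (hbval : cfVal b = (n : ℚ) / m)
    (c : List ℤ) (hc : c ≠ []) (hcval : cfVal c = (n : ℚ) / m) (hcvalid : ValidCF c) :
    ((b.map (fun x => |x| + 1)).sum : ℤ) ≤ (c.map (fun x => |x| + 1)).sum :=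
  euclidean_cf_minimizes_cost_general n m b hb hbpos hblast hbval c hc hcval
end

section
/- The matrix 𝒮 with entries 𝒮_{j₁,j₂} = √(2/(k+2)) · sin(π(2j₁+1)(2j₂+1)/(k+2)), where j₁, j₂ range over {0, 1/2, 1, …, k/2}, is real symmetric and satisfies 𝒮² = I; in particular 𝒮 is unitary. -/
/-!
Symmetry is clear from the formula. For `𝒮 * 𝒮 = 1`, write `n = k + 2`; the entries of `𝒮²` are
`(2/n) ∑_{m<n} sin(π a m/n) sin(π b m/n)` with `0 < a, b < n`. Product-to-sum turns this into sums
`∑_{m<n} cos(π c m/n)` with `c = a ∓ b`, and multiplying such a sum by `2 sin(πc/2n)` telescopes to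
`(1 - (-1)^c) sin(πc/2n)`. Since `a - b` and `a + b` have the same parity, the two sums cancel
unless `a = b`, when the first one is `n`.
-/

open Real Finset

theorem two_mul_sin_mul_sum_range_cos (y : ℝ) (n : ℕ) :
    2 * sin y * ∑ m ∈ range n, cos (2 * m * y) = sin ((2 * n - 1) * y) + sin y := by
  induction n with
  | zero => simp [neg_mul, sin_neg]
  | succ n ih =>
    rw [sum_range_succ, mul_add, ih, two_mul_sin_mul_cos]
    push_cast
    rw [show y - 2 * n * y = -((2 * n - 1) * y) by ring, sin_neg]
    ring_nf

theorem sum_range_cos_pi_int_mul {n : ℕ} (hn : 0 < n) {c : ℤ} (hc : ¬ (2 * n : ℤ) ∣ c) :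
    ∑ m ∈ range n, cos (π * c * m / n) = (1 - (-1) ^ c) / 2 := by
  have hn_ne : (n : ℝ) ≠ 0 := by positivity
  set y := π * c / (2 * n) with hy_def
  have hy : sin y ≠ 0 := by
    refine sin_ne_zero_iff.mpr fun j hj => hc ⟨j, ?_⟩
    have : (c : ℝ) = 2 * n * j := by
      rw [hy_def, eq_div_iff (by positivity)] at hj
      nlinarith [pi_pos]
    exact_mod_cast this
  have hsum := two_mul_sin_mul_sum_range_cos y n
  have hend : (2 * n - 1) * y = c * π - y := by rw [hy_def]; field_simp
  rw [hend, sin_int_mul_pi_sub] at hsum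
  have hterm : ∀ m : ℕ, cos (π * c * m / n) = cos (2 * m * y) := fun m => by
    rw [hy_def]; congr 1; field_simp
  simp_rw [hterm]
  apply mul_left_cancel₀ (mul_ne_zero two_ne_zero hy)
  rw [hsum]
  ring

theorem sum_range_sin_mul_sin {n a b : ℕ} (ha₀ : 0 < a) (ha : a < n) (hb : b < n) :
    ∑ m ∈ range n, sin (π * a * m / n) * sin (π * b * m / n) = if a = b then (n : ℝ) / 2 else 0 := by
  have hprod : ∀ m : ℕ, sin (π * a * m / n) * sin (π * b * m / n)
      = (cos (π * ((a - b : ℤ) : ℝ) * m / n) - cos (π * ((a + b : ℤ) : ℝ) * m / n)) / 2 := by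
    intro m
    rw [eq_div_iff two_ne_zero, mul_comm, ← mul_assoc, two_mul_sin_mul_sin]
    push_cast
    ring_nf
  have hplus : ¬ (2 * n : ℤ) ∣ a + b := fun h => by
    have := Int.eq_zero_of_abs_lt_dvd h (by rw [abs_lt]; omega)
    omega
  simp_rw [hprod, ← sum_div, sum_sub_distrib, sum_range_cos_pi_int_mul (by omega) hplus]
  split_ifs with hab
  · subst hab
    simp [Even.neg_one_zpow ⟨(a : ℤ), rfl⟩]
  · have hminus : ¬ (2 * n : ℤ) ∣ a - b := fun h => by
      have := Int.eq_zero_of_abs_lt_dvd h (by rw [abs_lt]; omega)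
      omega
    rw [sum_range_cos_pi_int_mul (by omega) hminus,
      show (a + b : ℤ) = a - b + 2 * b by ring, zpow_add₀ (by norm_num), zpow_mul]
    simp

noncomputable def su2SMatrix (k : ℕ) : Matrix (Fin (k + 1)) (Fin (k + 1)) ℝ := fun ℓ₁ ℓ₂ =>
  √(2 / (k + 2)) * sin (π * ((ℓ₁ : ℕ) + 1) * ((ℓ₂ : ℕ) + 1) / (k + 2))

theorem su2SMatrix_transpose (k : ℕ) : (su2SMatrix k).transpose = su2SMatrix k := by
  ext i j
  simp only [Matrix.transpose_apply, su2SMatrix]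
  ring_nf

theorem su2SMatrix_mul_self (k : ℕ) : su2SMatrix k * su2SMatrix k = 1 := by
  ext i j
  have hsq : √(2 / (k + 2 : ℝ)) * √(2 / (k + 2)) = 2 / (k + 2) := Real.mul_self_sqrt (by positivity)
  have hsum : ∑ ℓ : Fin (k + 1), sin (π * ((i : ℕ) + 1) * ((ℓ : ℕ) + 1) / (k + 2)) *
        sin (π * ((j : ℕ) + 1) * ((ℓ : ℕ) + 1) / (k + 2)) = if i = j then ((k : ℝ) + 2) / 2 else 0 := by
    have horth := sum_range_sin_mul_sin (n := k + 2) (a := i + 1) (b := j + 1) (by omega) (by omega) (by omega)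
    rw [Fin.sum_univ_eq_sum_range (fun m => sin (π * ((i : ℕ) + 1) * ((m : ℝ) + 1) / (k + 2)) *
      sin (π * ((j : ℕ) + 1) * ((m : ℝ) + 1) / (k + 2)))]
    rw [sum_range_succ'] at horth
    push_cast at horth
    simpa [Fin.val_inj] using horth
  calc (su2SMatrix k * su2SMatrix k) i j
      = 2 / (k + 2) * ∑ ℓ : Fin (k + 1), sin (π * ((i : ℕ) + 1) * ((ℓ : ℕ) + 1) / (k + 2)) *
          sin (π * ((j : ℕ) + 1) * ((ℓ : ℕ) + 1) / (k + 2)) := by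
        simp only [Matrix.mul_apply, su2SMatrix, mul_sum]
        refine sum_congr rfl fun ℓ _ => ?_
        rw [mul_mul_mul_comm, hsq, mul_right_comm π ((ℓ : ℕ) + 1 : ℝ)]
    _ = (1 : Matrix (Fin (k + 1)) (Fin (k + 1)) ℝ) i j := by
        rw [hsum, Matrix.one_apply]
        split_ifs
        · field_simp
        · simp

theorem SU2k_S_involution_general (k : ℕ) :
    let 𝒮 : Matrix (Fin (k + 1)) (Fin (k + 1)) ℝ := fun ℓ₁ ℓ₂ =>
      Real.sqrt (2 / (k + 2)) *
        Real.sin (Real.pi * ((ℓ₁ : ℕ) + 1) * ((ℓ₂ : ℕ) + 1) / (k + 2))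
    𝒮.transpose = 𝒮 ∧ 𝒮 * 𝒮 = 1 ∧ 𝒮.transpose * 𝒮 = 1 := by
  intro 𝒮
  have hsymm : 𝒮.transpose = 𝒮 := su2SMatrix_transpose k
  have hinv : 𝒮 * 𝒮 = 1 := su2SMatrix_mul_self k
  exact ⟨hsymm, hinv, by rw [hsymm, hinv]⟩

/-- The `SU(2)_k` modular S-matrix
`𝒮_{ℓ₁,ℓ₂} = √(2/(k+2))·sin(π(ℓ₁+1)(ℓ₂+1)/(k+2))` (with `ℓ = 2j`, `ℓ = 0,…,k`)
is symmetric and an involution, hence (being real) unitary. -/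
theorem SU2k_S_involution (k : ℕ) (hk : 0 < k) :
    let 𝒮 : Matrix (Fin (k + 1)) (Fin (k + 1)) ℝ := fun ℓ₁ ℓ₂ =>
      Real.sqrt (2 / (k + 2)) *
        Real.sin (Real.pi * ((ℓ₁ : ℕ) + 1) * ((ℓ₂ : ℕ) + 1) / (k + 2))
    𝒮.transpose = 𝒮 ∧ 𝒮 * 𝒮 = 1 ∧ 𝒮.transpose * 𝒮 = 1 :=
  SU2k_S_involution_general k
end

section
/- Let b₁, …, b_r be the Euclidean continued fraction coefficients of n/m (n > m > 0 coprime, b_r > 1) and set aᵢ = (-1)^{i+1} bᵢ. Then the SL(2,ℤ) matrix T^{a₁} S T^{a₂} S ⋯ T^{a_r} S has (1,1) entry ±n and (2,1) entry ±m (the same sign for both), i.e., it maps the vector (1,0)ᵀ to ±(n,m)ᵀ. -/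
/-- The word `T^{a₁} S T^{a₂} S ⋯ T^{a_r} S` associated to the alternating
coefficients `aᵢ = (-1)^{i+1} bᵢ`. -/
def cfWord (b : List ℤ) : Matrix (Fin 2) (Fin 2) ℤ :=
  ((List.zipWith (fun (i : ℕ) (x : ℤ) => (-1 : ℤ) ^ i * x) (List.range b.length) b).map
    (fun a => !![1, a; 0, 1] * !![0, -1; 1, 0])).prod

def Wd : List ℤ → ℤ → Matrix (Fin 2) (Fin 2) ℤ
  | [], _ => 1
  | a :: l, ε => (!![1, ε * a; 0, 1] * !![0, -1; 1, 0]) * Wd l (-ε)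

lemma entry00 (c : ℤ) (M : Matrix (Fin 2) (Fin 2) ℤ) :
    ((!![1, c; 0, 1] * !![0, -1; 1, 0] * M : Matrix (Fin 2) (Fin 2) ℤ)) 0 0
      = c * M 0 0 - M 1 0 := by
  simp [Matrix.mul_apply, Fin.sum_univ_two]
  ring

lemma entry10 (c : ℤ) (M : Matrix (Fin 2) (Fin 2) ℤ) :
    ((!![1, c; 0, 1] * !![0, -1; 1, 0] * M : Matrix (Fin 2) (Fin 2) ℤ)) 1 0 = M 0 0 := by
  simp [Matrix.mul_apply, Fin.sum_univ_two]

lemma Wd_cons00 (a ε : ℤ) (l : List ℤ) :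
    Wd (a :: l) ε 0 0 = ε * a * Wd l (-ε) 0 0 - Wd l (-ε) 1 0 := by
  show ((!![1, ε * a; 0, 1] * !![0, -1; 1, 0] * Wd l (-ε) : Matrix (Fin 2) (Fin 2) ℤ)) 0 0 = _
  rw [entry00]

lemma Wd_cons10 (a ε : ℤ) (l : List ℤ) :
    Wd (a :: l) ε 1 0 = Wd l (-ε) 0 0 := by
  show ((!![1, ε * a; 0, 1] * !![0, -1; 1, 0] * Wd l (-ε) : Matrix (Fin 2) (Fin 2) ℤ)) 1 0 = _
  rw [entry10]

lemma cfWord_eq_aux : ∀ (b : List ℤ) (ε : ℤ),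
    ((List.zipWith (fun (i : ℕ) (x : ℤ) => (-1 : ℤ) ^ i * (ε * x)) (List.range b.length) b).map
      (fun a => !![1, a; 0, 1] * !![0, -1; 1, 0])).prod = Wd b ε := by
  intro b
  induction b with
  | nil => intro ε; simp [Wd]
  | cons a l ih =>
    intro ε
    have hr : List.range (a :: l).length = 0 :: (List.range l.length).map (· + 1) := by
      simp [List.range_succ_eq_map]
    rw [hr]
    rw [List.zipWith_cons_cons, List.map_cons, List.prod_cons]
    have hzw : List.zipWith (fun (i : ℕ) (x : ℤ) => (-1 : ℤ) ^ i * (ε * x))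
        ((List.range l.length).map (· + 1)) l
        = List.zipWith (fun (i : ℕ) (x : ℤ) => (-1 : ℤ) ^ i * ((-ε) * x))
          (List.range l.length) l := by
      rw [List.zipWith_map_left]
      congr 1
      funext i x
      rw [pow_succ]
      ring
    rw [hzw, ih (-ε)]
    simp [Wd]

lemma cfWord_eq (b : List ℤ) : cfWord b = Wd b 1 := by
  have h := cfWord_eq_aux b 1
  simp only [one_mul] at h
  rw [cfWord, ← h]

lemma main_lemma : ∀ b : List ℤ, b ≠ [] → (∀ x ∈ b, 0 < x) →
    ∃ n m : ℤ, 0 < m ∧ m ≤ n ∧ IsCoprime n m ∧ cfVal b = (n : ℚ) / m ∧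
      ((Wd b 1 0 0 = n ∧ Wd b 1 1 0 = m) ∨ (Wd b 1 0 0 = -n ∧ Wd b 1 1 0 = -m)) ∧
      ((Wd b (-1) 0 0 = -n ∧ Wd b (-1) 1 0 = m) ∨
        (Wd b (-1) 0 0 = n ∧ Wd b (-1) 1 0 = -m)) := by
  intro b
  induction b with
  | nil => intro h; simp at h
  | cons a l ih =>
    intro _ hpos
    cases l with
    | nil =>
      have ha : 0 < a := hpos a (by simp)
      have hW0 : ∀ ε : ℤ, Wd [] ε 0 0 = 1 := by intro ε; simp [Wd, Matrix.one_apply]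
      have hW1 : ∀ ε : ℤ, Wd [] ε 1 0 = 0 := by intro ε; simp [Wd, Matrix.one_apply]
      refine ⟨a, 1, one_pos, ha, isCoprime_one_right, by simp [cfVal], ?_, ?_⟩
      · left
        rw [Wd_cons00, Wd_cons10, hW0, hW1]
        constructor <;> ring
      · left
        rw [Wd_cons00, Wd_cons10, hW0, hW1]
        constructor <;> ring
    | cons c l2 =>
      have ha : 0 < a := hpos a (by simp)
      obtain ⟨n', m', hm', hmn', hcop', hval', hT1, hT2⟩ :=
        ih (by simp) (fun x hx => hpos x (by simp [hx]))
      have hn' : 0 < n' := lt_of_lt_of_le hm' hmn'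
      refine ⟨m' + n' * a, n', hn', by nlinarith, hcop'.symm.add_mul_left_left a, ?_, ?_, ?_⟩
      · have hval : cfVal (a :: c :: l2) = (a : ℚ) + 1 / cfVal (c :: l2) := rfl
        rw [hval, hval']
        have h1 : (n' : ℚ) ≠ 0 := by exact_mod_cast hn'.ne'
        have h2 : (m' : ℚ) ≠ 0 := by exact_mod_cast hm'.ne'
        field_simp
        push_cast
        ring
      · rw [Wd_cons00 a 1 (c :: l2), Wd_cons10 a 1 (c :: l2)]
        rcases hT2 with ⟨h1, h2⟩ | ⟨h1, h2⟩
        · right; rw [h1, h2]; constructor <;> ring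
        · left; rw [h1, h2]; constructor <;> ring
      · rw [Wd_cons00 a (-1) (c :: l2), Wd_cons10 a (-1) (c :: l2), neg_neg]
        rcases hT1 with ⟨h1, h2⟩ | ⟨h1, h2⟩
        · left; rw [h1, h2]; constructor <;> ring
        · right; rw [h1, h2]; constructor <;> ring

/-- If `[b₁;…,b_r]` is the Euclidean continued fraction of `n/m` (`n > m > 0`
coprime, last coefficient `> 1`), then `T^{a₁} S ⋯ T^{a_r} S` with
`aᵢ = (-1)^{i+1} bᵢ` maps `(1,0)ᵀ` to `±(n,m)ᵀ`. -/
theorem cfWord_first_column (n m : ℤ) (hm : 0 < m) (hnm : m < n) (hcop : IsCoprime n m)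
    (b : List ℤ) (hb : b ≠ []) (hbpos : ∀ x ∈ b, 0 < x)
    (hblast : b.length = 1 ∨ 1 < b.getLast!) (hbval : cfVal b = (n : ℚ) / m) :
    (cfWord b 0 0 = n ∧ cfWord b 1 0 = m) ∨
      (cfWord b 0 0 = -n ∧ cfWord b 1 0 = -m) := by
  obtain ⟨n₀, m₀, hm₀, hmn₀, hcop₀, hval₀, hW, -⟩ := main_lemma b hb hbpos
  have hq : (n : ℚ) / m = (n₀ : ℚ) / m₀ := by rw [← hbval, hval₀]
  have hmQ : (m : ℚ) ≠ 0 := by exact_mod_cast hm.ne'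
  have hm₀Q : (m₀ : ℚ) ≠ 0 := by exact_mod_cast hm₀.ne'
  rw [div_eq_div_iff hmQ hm₀Q] at hq
  have hZ : n * m₀ = n₀ * m := by exact_mod_cast hq
  have hd1 : m ∣ m₀ := by
    refine hcop.symm.dvd_of_dvd_mul_left ?_
    exact ⟨n₀, by linarith [hZ]⟩
  have hd2 : m₀ ∣ m := by
    refine hcop₀.symm.dvd_of_dvd_mul_left ?_
    exact ⟨n, by linarith [hZ]⟩
  have hmm : m = m₀ := Int.dvd_antisymm hm.le hm₀.le hd1 hd2
  have hnn : n = n₀ := by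
    rw [hmm] at hZ
    exact mul_right_cancel₀ (by exact_mod_cast hm₀.ne') hZ
  rw [cfWord_eq, hmm, hnn]
  exact hW
end
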